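/- arXiv:1212.6609 — 4 statements merged into one kernel-verified Lean document; each statement's English description precedes it below -/
import Mathlib

section
/- Let P be a finite set of positive integers, m = min P, k ≥ 0, and Q = {p - m : p ∈ P, p ≠ m} ∪ {m}. For all i, j ∈ {0, 1, …, k-1}, the equivalence class of i under ≈_{Q,k} equals the equivalence class of j under ≈_{Q,k} if and only if the equivalence class of i under ≈_{P,k+m} equals the equivalence class of j under ≈_{P,k+m}. -/
/-!
Write `m = min P` and `Q = Qred P`. Every `Q`-step inside `[0, k)` is realised in `≈_{P,k+m}`
(and a congruence mod `min Q` is a chain of such steps):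
a step by `m` is a congruence mod `m`, and a step by `p - m` is the `P`-jump `a → a + p` followed
by the congruence `a + p ≡ a + p - m`. Conversely, the retraction of `[0, k + m)` onto `[0, k)`
that moves the top block down by `m` sends every generator of `≈_{P,k+m}` into `≈_{Q,k}`:
congruences mod `m` become chains of `m`-steps (as `m ∈ Q`), and a jump `a → a + p` with `p > m`
becomes the `Q`-step `a → a + (p - m)` followed by a congruence. The retraction respects
congruences because two distinct congruent points of `[0, k + m)` are at least `m` apart, so the
lower one lies in `[0, k)` and the upper one is moved within its residue class.
-/

/-- minimum of a finite set of naturals (as `sInf`). -/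
noncomputable def mP (P : Finset ℕ) : ℕ := sInf (↑P : Set ℕ)

/-- the generating relation `∼_{P,k}` on `{0,…,k-1}`. -/
def simRel (P : Finset ℕ) (k i j : ℕ) : Prop :=
  i < k ∧ j < k ∧ (i % mP P = j % mP P ∨
    ∃ i' j', i' < k ∧ j' < k ∧ i' % mP P = i % mP P ∧ j' % mP P = j % mP P ∧
      (max i' j' - min i' j') ∈ P)

/-- the class of `i` under the equivalence closure `≈_{P,k}`. -/
def cls (P : Finset ℕ) (k i : ℕ) : Set ℕ := {j | Relation.EqvGen (simRel P k) i j}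

/-- the FW-word: `FW P k i = min [i]_{P,k}`. -/
noncomputable def FW (P : Finset ℕ) (k : ℕ) : ℕ → ℕ := fun i => sInf (cls P k i)

/-- Euclidean reduction `Q = {p - m : p ∈ P, p ≠ m} ∪ {m}`. -/
noncomputable def Qred (P : Finset ℕ) : Finset ℕ :=
  ((P.erase (mP P)).image (fun p => p - mP P)) ∪ {mP P}

/-- `p` is a period of the word `w` of length `n`. -/
def HasPeriodF {A : Type*} (w : ℕ → A) (n p : ℕ) : Prop :=
  ∀ i, i + p < n → w i = w (i + p)

open Relation

theorem Equivalence.rel_of_modEq {E : ℕ → ℕ → Prop} (hE : Equivalence E) {d n : ℕ}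
    (hstep : ∀ a, a + d < n → E a (a + d)) {x y : ℕ} (hx : x < n) (hy : y < n)
    (hxy : x ≡ y [MOD d]) : E x y := by
  wlog hle : x ≤ y generalizing x y
  · exact hE.symm (this hy hx hxy.symm (le_of_not_ge hle))
  obtain ⟨t, rfl⟩ : ∃ t, y = x + d * t := by
    obtain ⟨t, ht⟩ := (Nat.modEq_iff_dvd' hle).1 hxy
    exact ⟨t, by omega⟩
  clear hxy hle
  induction t with
  | zero => exact hE.refl x
  | succ t ih =>
    rw [Nat.mul_succ, ← add_assoc] at hy ⊢
    exact hE.trans (ih (by omega)) (hstep _ hy)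

section simRel

variable {S : Finset ℕ} {n : ℕ}

theorem simRel_of_modEq {x y : ℕ} (hx : x < n) (hy : y < n) (hxy : x ≡ y [MOD mP S]) :
    simRel S n x y :=
  ⟨hx, hy, Or.inl hxy⟩

theorem simRel_add_of_mem {a p : ℕ} (hp : p ∈ S) (h : a + p < n) : simRel S n a (a + p) :=
  ⟨by omega, h, Or.inr ⟨a, a + p, by omega, h, rfl, rfl, by simpa using hp⟩⟩

theorem rel_of_simRel {E : ℕ → ℕ → Prop} (hE : Equivalence E)
    (hmod : ∀ x y, x < n → y < n → x ≡ y [MOD mP S] → E x y)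
    (hadd : ∀ a p, p ∈ S → a + p < n → E a (a + p)) {x y : ℕ} (h : simRel S n x y) :
    E x y := by
  obtain ⟨hx, hy, hxy | ⟨i', j', hi', hj', hix, hjy, hdist⟩⟩ := h
  · exact hmod x y hx hy hxy
  have hle_rel : ∀ a b, a ≤ b → b - a ∈ S → b < n → E a b := by
    intro a b hab hp hb
    obtain ⟨p, rfl⟩ := Nat.exists_eq_add_of_le hab
    exact hadd a p (by simpa using hp) hb
  have hij : E i' j' := by
    rcases le_total i' j' with hle | hle
    · exact hle_rel i' j' hle (by simpa [hle] using hdist) hj'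
    · exact hE.symm (hle_rel j' i' hle (by simpa [hle] using hdist) hi')
  exact hE.trans (hmod x i' hx hi' hix.symm) (hE.trans hij (hmod j' y hj' hy hjy))

theorem rel_of_eqvGen_simRel {E : ℕ → ℕ → Prop} (hE : Equivalence E)
    (hmod : ∀ x y, x < n → y < n → x ≡ y [MOD mP S] → E x y)
    (hadd : ∀ a p, p ∈ S → a + p < n → E a (a + p)) {x y : ℕ}
    (h : EqvGen (simRel S n) x y) : E x y :=
  hE.eqvGen_iff.1 (EqvGen.mono (fun _ _ => rel_of_simRel hE hmod hadd) _ _ h)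

end simRel

theorem cls_eq_cls_iff (S : Finset ℕ) (n i j : ℕ) :
    cls S n i = cls S n j ↔ EqvGen (simRel S n) i j := by
  have hE := EqvGen.is_equivalence (simRel S n)
  refine ⟨fun h => ?_, fun h => Set.ext fun z => ⟨hE.trans (hE.symm h), hE.trans h⟩⟩
  have hj : j ∈ cls S n j := hE.refl j
  rwa [← h] at hj

theorem mP_le {P : Finset ℕ} {p : ℕ} (hp : p ∈ P) : mP P ≤ p :=
  Nat.sInf_le (Finset.mem_coe.2 hp)

theorem mem_Qred {P : Finset ℕ} {q : ℕ} :
    q ∈ Qred P ↔ q = mP P ∨ ∃ p ∈ P, p ≠ mP P ∧ p - mP P = q := by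
  simp [Qred, and_left_comm, and_assoc]

theorem mP_mem_Qred (P : Finset ℕ) : mP P ∈ Qred P :=
  mem_Qred.2 (Or.inl rfl)

theorem mP_Qred_mem_Qred (P : Finset ℕ) : mP (Qred P) ∈ Qred P :=
  Nat.sInf_mem (s := (Qred P : Set ℕ)) ⟨mP P, mP_mem_Qred P⟩

theorem sub_mP_mem_Qred {P : Finset ℕ} {p : ℕ} (hp : p ∈ P) (hne : p ≠ mP P) :
    p - mP P ∈ Qred P :=
  mem_Qred.2 (Or.inr ⟨p, hp, hne, rfl⟩)

def retract (k m x : ℕ) : ℕ := if x < k then x else x - m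

theorem retract_of_lt {k m x : ℕ} (hx : x < k) : retract k m x = x := if_pos hx

theorem retract_lt {k m x : ℕ} (hx : x < k + m) (hmx : m ≤ x) : retract k m x < k := by
  unfold retract; split <;> omega

theorem retract_modEq {k m x : ℕ} (hmx : m ≤ x) : retract k m x ≡ x [MOD m] := by
  unfold retract; split
  · rfl
  · conv_rhs => rw [← Nat.sub_add_cancel hmx]
    exact Nat.add_modEq_right.symm

section Qred

variable {P : Finset ℕ} {k : ℕ}

theorem eqvGen_simRel_add_of_mem_Qred {a q : ℕ} (hq : q ∈ Qred P) (h : a + q < k) :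
    EqvGen (simRel P (k + mP P)) a (a + q) := by
  rcases mem_Qred.1 hq with rfl | ⟨p, hp, hne, rfl⟩
  · exact .rel _ _ (simRel_of_modEq (by omega) (by omega) Nat.add_modEq_right.symm)
  have hmp := mP_le hp
  have hjump : simRel P (k + mP P) a (a + p) := simRel_add_of_mem hp (by omega)
  have hmod : simRel P (k + mP P) (a + p) (a + (p - mP P)) :=
    simRel_of_modEq (by omega) (by omega) <| by
      rw [show a + p = a + (p - mP P) + mP P by omega]
      exact Nat.add_modEq_right
  exact .trans _ _ _ (.rel _ _ hjump) (.rel _ _ hmod)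

theorem eqvGen_simRel_of_eqvGen_simRel_Qred {x y : ℕ} (h : EqvGen (simRel (Qred P) k) x y) :
    EqvGen (simRel P (k + mP P)) x y :=
  rel_of_eqvGen_simRel (EqvGen.is_equivalence _)
    (fun _ _ hx hy => (EqvGen.is_equivalence _).rel_of_modEq
      (fun _ => eqvGen_simRel_add_of_mem_Qred (mP_Qred_mem_Qred P)) hx hy)
    (fun _ _ => eqvGen_simRel_add_of_mem_Qred) h


theorem eqvGen_retract_of_modEq {x y : ℕ} (hx : x < k + mP P) (hy : y < k + mP P)
    (hxy : x ≡ y [MOD mP P]) :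
    EqvGen (simRel (Qred P) k) (retract k (mP P) x) (retract k (mP P) y) := by
  wlog hle : x ≤ y generalizing x y
  · exact .symm _ _ (this hy hx hxy.symm (le_of_not_ge hle))
  rcases hle.eq_or_lt with rfl | hlt
  · exact .refl _
  have hgap : mP P ≤ y - x := Nat.le_of_dvd (by omega) ((Nat.modEq_iff_dvd' hle).1 hxy)
  rw [retract_of_lt (by omega : x < k)]
  refine (EqvGen.is_equivalence _).rel_of_modEq
    (fun a ha => .rel _ _ (simRel_add_of_mem (mP_mem_Qred P) ha)) (by omega)
    (retract_lt hy (by omega))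
    (hxy.trans (retract_modEq (by omega)).symm)

theorem eqvGen_retract_add_of_mem {a p : ℕ} (hp : p ∈ P) (h : a + p < k + mP P) :
    EqvGen (simRel (Qred P) k) (retract k (mP P) a) (retract k (mP P) (a + p)) := by
  have hmp := mP_le hp
  have ha : a + (p - mP P) < k := by omega
  have hstep : EqvGen (simRel (Qred P) k) a (a + (p - mP P)) := by
    rcases eq_or_ne p (mP P) with rfl | hne
    · simpa using EqvGen.refl a
    · exact .rel _ _ (simRel_add_of_mem (sub_mP_mem_Qred hp hne) ha)
  have hmod := eqvGen_retract_of_modEq (x := a + (p - mP P)) (by omega) h <| by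
    rw [show a + p = a + (p - mP P) + mP P by omega]
    exact Nat.add_modEq_right.symm
  rw [retract_of_lt (by omega : a < k)]
  rw [retract_of_lt ha] at hmod
  exact .trans _ _ _ hstep hmod

theorem eqvGen_retract_of_eqvGen {x y : ℕ} (h : EqvGen (simRel P (k + mP P)) x y) :
    EqvGen (simRel (Qred P) k) (retract k (mP P) x) (retract k (mP P) y) :=
  rel_of_eqvGen_simRel ((EqvGen.is_equivalence _).comap _)
    (fun _ _ => eqvGen_retract_of_modEq) (fun _ _ => eqvGen_retract_add_of_mem) h

end Qred

theorem stmt1_general (P : Finset ℕ) (k i j : ℕ) (hi : i < k) (hj : j < k) :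
    cls (Qred P) k i = cls (Qred P) k j ↔ cls P (k + mP P) i = cls P (k + mP P) j := by
  rw [cls_eq_cls_iff, cls_eq_cls_iff]
  refine ⟨eqvGen_simRel_of_eqvGen_simRel_Qred, fun h => ?_⟩
  simpa only [retract_of_lt hi, retract_of_lt hj] using eqvGen_retract_of_eqvGen h

theorem stmt1 (P : Finset ℕ) (hP : P.Nonempty) (hpos : ∀ p ∈ P, 0 < p)
    (k i j : ℕ) (hi : i < k) (hj : j < k) :
    cls (Qred P) k i = cls (Qred P) k j ↔ cls P (k + mP P) i = cls P (k + mP P) j :=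
  stmt1_general P k i j hi hj
end

section
/- Let P be a finite set of positive integers, and define L(P) as the maximal length of a word w with periods P such that gcd(P) is not a period of w. Let m = min P and Q = {p - m : p ∈ P, p ≠ m} ∪ {m}, and assume m does not divide all elements of P (so nontrivial words exist). Then L(P) = m + max{L(Q), m - 1}. -/
/-- length of the longest non-trivial word with periods `P`. -/
noncomputable def Lext (P : Finset ℕ) : ℕ :=
  sSup {n | ∃ w : ℕ → ℕ, (∀ p ∈ P, HasPeriodF w n p) ∧ ¬ HasPeriodF w n (P.gcd id)}

namespace Stmt11Aux

/-- `n` is the length of some non-trivial word with periods `P`. -/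
def NT (P : Finset ℕ) (n : ℕ) : Prop :=
  ∃ w : ℕ → ℕ, (∀ p ∈ P, HasPeriodF w n p) ∧ ¬ HasPeriodF w n (P.gcd id)

lemma lext_def (P : Finset ℕ) : Lext P = sSup {n | NT P n} := rfl

lemma mP_mem (P : Finset ℕ) (hP : P.Nonempty) : mP P ∈ P := by
  have h : (↑P : Set ℕ).Nonempty := by exact_mod_cast hP
  have := Nat.sInf_mem h
  exact_mod_cast this

lemma mP_le (P : Finset ℕ) {p : ℕ} (hp : p ∈ P) : mP P ≤ p :=
  Nat.sInf_le (by exact_mod_cast hp)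

lemma mem_Qred_self (P : Finset ℕ) : mP P ∈ Qred P :=
  Finset.mem_union_right _ (Finset.mem_singleton_self _)

lemma sub_mem_Qred {P : Finset ℕ} {p : ℕ} (hp : p ∈ P) (hne : p ≠ mP P) :
    p - mP P ∈ Qred P :=
  Finset.mem_union_left _ (Finset.mem_image_of_mem _ (Finset.mem_erase.mpr ⟨hne, hp⟩))

lemma Qred_nonempty (P : Finset ℕ) : (Qred P).Nonempty := ⟨mP P, mem_Qred_self P⟩

lemma Qred_pos (P : Finset ℕ) (hP : P.Nonempty) (hpos : ∀ p ∈ P, 0 < p) :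
    ∀ q ∈ Qred P, 0 < q := by
  intro q hq
  rcases Finset.mem_union.mp hq with h | h
  · obtain ⟨p, hp', rfl⟩ := Finset.mem_image.mp h
    have hne : p ≠ mP P := (Finset.mem_erase.mp hp').1
    have hp := Finset.mem_of_mem_erase hp'
    have := mP_le P hp
    omega
  · rw [Finset.mem_singleton.mp h]
    exact hpos _ (mP_mem P hP)

lemma gcd_Qred (P : Finset ℕ) (hP : P.Nonempty) : (Qred P).gcd id = P.gcd id := by
  apply Nat.dvd_antisymm
  · apply Finset.dvd_gcd
    intro p hp
    by_cases h : p = mP P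
    · subst h
      exact Finset.gcd_dvd (mem_Qred_self P)
    · have h1 : (Qred P).gcd id ∣ p - mP P := Finset.gcd_dvd (sub_mem_Qred hp h)
      have h2 : (Qred P).gcd id ∣ mP P := Finset.gcd_dvd (mem_Qred_self P)
      have hle := mP_le P hp
      have he : (id p : ℕ) = (p - mP P) + mP P := by simp; omega
      rw [he]
      exact dvd_add h1 h2
  · apply Finset.dvd_gcd
    intro q hq
    rcases Finset.mem_union.mp hq with h | h
    · obtain ⟨p, hp', rfl⟩ := Finset.mem_image.mp h
      have hp := Finset.mem_of_mem_erase hp'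
      exact Nat.dvd_sub (Finset.gcd_dvd hp) (Finset.gcd_dvd (mP_mem P hP))
    · rw [Finset.mem_singleton.mp h]
      exact Finset.gcd_dvd (mP_mem P hP)

lemma period_mul {w : ℕ → ℕ} {N g : ℕ} (h : HasPeriodF w N g) :
    ∀ k a, a + g * k < N → w a = w (a + g * k) := by
  intro k
  induction k with
  | zero => intro a _; simp
  | succ k ih =>
    intro a ha
    have e : g * (k + 1) = g * k + g := by ring
    have h1 : a + g < N := by omega
    have h2 : (a + g) + g * k < N := by omega
    calc w a = w (a + g) := h a h1
      _ = w (a + g + g * k) := ih (a + g) h2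
      _ = w (a + g * (k + 1)) := by congr 1; omega

lemma period_congr {w : ℕ → ℕ} {N g a b : ℕ} (h : HasPeriodF w N g)
    (hab : a ≤ b) (hb : b < N) (hd : g ∣ b - a) : w a = w b := by
  obtain ⟨k, hk⟩ := hd
  have hb' : b = a + g * k := by omega
  rw [hb']
  exact period_mul h k a (by omega)

/-- extension step: a non-trivial `Q`-word of length `n` gives a non-trivial
`P`-word of length `n + m`. -/
lemma NT_add (P : Finset ℕ) (hP : P.Nonempty) {n : ℕ} (hQ : NT (Qred P) n) :
    NT P (n + mP P) := by
  obtain ⟨u, hper, hnp⟩ := hQ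
  have hum : HasPeriodF u n (mP P) := hper (mP P) (mem_Qred_self P)
  refine ⟨fun i => if i < n then u i else u (i - mP P), ?_, ?_⟩
  · intro p hp i hi
    have hmp : mP P ≤ p := mP_le P hp
    have hiln : i < n := by omega
    show (if i < n then u i else u (i - mP P)) =
      (if i + p < n then u (i + p) else u (i + p - mP P))
    rw [if_pos hiln]
    by_cases hip : i + p < n
    · rw [if_pos hip]
      by_cases hpm : p = mP P
      · subst hpm
        exact hum i hip
      · have h1 := hper (p - mP P) (sub_mem_Qred hp hpm) i (by omega)
        have h2 := hum (i + (p - mP P)) (by omega)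
        rw [h1, h2]
        congr 1
        omega
    · rw [if_neg hip]
      by_cases hpm : p = mP P
      · subst hpm
        congr 1
        omega
      · have h1 := hper (p - mP P) (sub_mem_Qred hp hpm) i (by omega)
        rw [h1]
        congr 1
        omega
  · rw [gcd_Qred P hP] at hnp
    intro hcon
    apply hnp
    intro i hi
    have h1 : i < n := by omega
    have h2 := hcon i (by omega)
    simp only [] at h2
    rwa [if_pos h1, if_pos hi] at h2

/-- a non-trivial `P`-word of length `2m - 1` always exists. -/
lemma NT_two (P : Finset ℕ) (hP : P.Nonempty) (hpos : ∀ p ∈ P, 0 < p)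
    (hnt : ¬ ∀ p ∈ P, mP P ∣ p) : NT P (2 * mP P - 1) := by
  have hm : mP P ∈ P := mP_mem P hP
  have hmpos : 0 < mP P := hpos _ hm
  have hgm : P.gcd id ∣ mP P := Finset.gcd_dvd hm
  have hgne : P.gcd id ≠ mP P := by
    intro h
    exact hnt (fun p hp => h ▸ Finset.gcd_dvd hp)
  have hglt : P.gcd id < mP P :=
    lt_of_le_of_ne (Nat.le_of_dvd hmpos hgm) hgne
  have hgpos : 0 < P.gcd id := by
    rcases Nat.eq_zero_or_pos (P.gcd id) with h | h
    · rw [h] at hgm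
      have := Nat.eq_zero_of_zero_dvd hgm
      omega
    · exact h
  refine ⟨fun i => if i = mP P - 1 then 1 else 0, ?_, ?_⟩
  · intro p hp i hi
    have hmp : mP P ≤ p := mP_le P hp
    have h1 : i ≠ mP P - 1 := by omega
    have h2 : i + p ≠ mP P - 1 := by omega
    simp [h1, h2]
  · intro hcon
    have h := hcon (mP P - 1 - P.gcd id) (by omega)
    have e : mP P - 1 - P.gcd id + P.gcd id = mP P - 1 := by omega
    rw [e] at h
    simp [show mP P - 1 - P.gcd id ≠ mP P - 1 by omega] at h

/-- restriction step: a non-trivial `P`-word of length `n ≥ 2m` gives a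
non-trivial `Q`-word of length `n - m`. -/
lemma NT_sub (P : Finset ℕ) (hP : P.Nonempty) (hpos : ∀ p ∈ P, 0 < p) {n : ℕ}
    (hn : 2 * mP P ≤ n) (hN : NT P n) : NT (Qred P) (n - mP P) := by
  obtain ⟨w, hper, hnp⟩ := hN
  have hm : mP P ∈ P := mP_mem P hP
  have hmpos : 0 < mP P := hpos _ hm
  have hpm : HasPeriodF w n (mP P) := hper (mP P) hm
  have hgm : P.gcd id ∣ mP P := Finset.gcd_dvd hm
  have hgle : P.gcd id ≤ mP P := Nat.le_of_dvd hmpos hgm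
  refine ⟨w, ?_, ?_⟩
  · intro q hq i hi
    rcases Finset.mem_union.mp hq with h | h
    · obtain ⟨p, hp', rfl⟩ := Finset.mem_image.mp h
      have hne : p ≠ mP P := (Finset.mem_erase.mp hp').1
      have hp := Finset.mem_of_mem_erase hp'
      have hmp : mP P ≤ p := mP_le P hp
      have h1 := hper p hp i (by omega)
      have h2 := hpm (i + (p - mP P)) (by omega)
      rw [h1, h2]
      congr 1
      omega
    · rw [Finset.mem_singleton.mp h] at hi ⊢
      exact hpm i (by omega)
  · rw [gcd_Qred P hP]
    intro hcon
    apply hnp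
    intro i hi
    by_cases c1 : i + P.gcd id < n - mP P
    · exact hcon i c1
    · by_cases c2 : i < n - mP P
      · have h2 := hpm (i + P.gcd id - mP P) (by omega)
        have e : i + P.gcd id - mP P + mP P = i + P.gcd id := by omega
        rw [e] at h2
        have h4 : w (i + P.gcd id - mP P) = w i := by
          refine period_congr hcon (by omega) c2 ?_
          have e2 : i - (i + P.gcd id - mP P) = mP P - P.gcd id := by omega
          rw [e2]
          exact Nat.dvd_sub hgm dvd_rfl
        rw [← h4, h2]
      · have hi' : mP P ≤ i := by omega
        have h1 := hpm (i - mP P) (by omega)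
        have h2 := hpm (i + P.gcd id - mP P) (by omega)
        have e1 : i - mP P + mP P = i := by omega
        have e2 : i + P.gcd id - mP P + mP P = i + P.gcd id := by omega
        rw [e1] at h1
        rw [e2] at h2
        have h3 := hcon (i - mP P) (by omega)
        calc w i = w (i - mP P) := h1.symm
          _ = w (i - mP P + P.gcd id) := h3
          _ = w (i + P.gcd id) := by
              rw [show i - mP P + P.gcd id = i + P.gcd id - mP P by omega]
              exact h2

/-- generalized Fine–Wilf boundedness: a non-trivial `P`-word has length
at most `2 * ∑ P`. -/
lemma NT_le : ∀ s (P : Finset ℕ), P.sum id = s → P.Nonempty → (∀ p ∈ P, 0 < p) →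
    ∀ n, NT P n → n ≤ 2 * s := by
  intro s
  induction s using Nat.strong_induction_on with
  | _ s ih =>
    intro P hs hP hpos n hn
    have hm : mP P ∈ P := mP_mem P hP
    have hmpos : 0 < mP P := hpos _ hm
    have hms : mP P ≤ s := by
      rw [← hs]
      exact Finset.single_le_sum (f := id) (fun i _ => Nat.zero_le _) hm
    by_cases hnt : ∀ p ∈ P, mP P ∣ p
    · exfalso
      have hgm : P.gcd id ∣ mP P := Finset.gcd_dvd hm
      have hmg : mP P ∣ P.gcd id := Finset.dvd_gcd (fun p hp => hnt p hp)
      have hg : P.gcd id = mP P := Nat.dvd_antisymm hgm hmg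
      obtain ⟨w, hper, hnp⟩ := hn
      exact hnp (hg ▸ hper (mP P) hm)
    · by_cases hbig : 2 * mP P ≤ n
      · have hQ := NT_sub P hP hpos hbig hn
        push_neg at hnt
        obtain ⟨p0, hp0, hp0nd⟩ := hnt
        have hp0ne : p0 ≠ mP P := by
          rintro rfl
          exact hp0nd dvd_rfl
        have hp0m : mP P ≤ p0 := mP_le P hp0
        have hp0e : p0 ∈ P.erase (mP P) := Finset.mem_erase.mpr ⟨hp0ne, hp0⟩
        -- sum estimate : (Qred P).sum id + mP P ≤ s
        have hinj : Set.InjOn (fun p => p - mP P) ↑(P.erase (mP P)) := by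
          intro a ha b hb hab
          have ha' := mP_le P (Finset.mem_of_mem_erase (by exact_mod_cast ha))
          have hb' := mP_le P (Finset.mem_of_mem_erase (by exact_mod_cast hb))
          simp only at hab
          omega
        have e1 : ((P.erase (mP P)).image (fun p => p - mP P)).sum id =
            (P.erase (mP P)).sum (fun p => p - mP P) := Finset.sum_image
          (fun a ha b hb => hinj (by exact_mod_cast ha) (by exact_mod_cast hb))
        have e2 : (P.erase (mP P)).sum (fun p => p - mP P) =
            (p0 - mP P) + ((P.erase (mP P)).erase p0).sum (fun p => p - mP P) :=
          (Finset.add_sum_erase _ _ hp0e).symm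
        have e3 : (P.erase (mP P)).sum id =
            p0 + ((P.erase (mP P)).erase p0).sum id :=
          (Finset.add_sum_erase _ _ hp0e).symm
        have e4 : s = mP P + (P.erase (mP P)).sum id := by
          rw [← hs]
          exact (Finset.add_sum_erase _ _ hm).symm
        have e5 : ((P.erase (mP P)).erase p0).sum (fun p => p - mP P) ≤
            ((P.erase (mP P)).erase p0).sum id :=
          Finset.sum_le_sum (fun i _ => by simp)
        have e6 : (Qred P).sum id ≤
            ((P.erase (mP P)).image (fun p => p - mP P)).sum id + mP P := by
          show (((P.erase (mP P)).image (fun p => p - mP P)) ∪ {mP P}).sum id ≤ _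
          by_cases hmem : mP P ∈ (P.erase (mP P)).image (fun p => p - mP P)
          · rw [Finset.union_eq_left.mpr (Finset.singleton_subset_iff.mpr hmem)]
            omega
          · rw [Finset.sum_union (Finset.disjoint_singleton_right.mpr hmem),
              Finset.sum_singleton]
            rfl
        have hsum : (Qred P).sum id + mP P ≤ s := by
          rw [e4]
          have := e6
          rw [e1, e2] at this
          omega
        have hlt : (Qred P).sum id < s := by omega
        have hb := ih _ hlt (Qred P) rfl (Qred_nonempty P) (Qred_pos P hP hpos)
          (n - mP P) hQ
        omega
      · omega

lemma bddAbove_NT (P : Finset ℕ) (hP : P.Nonempty) (hpos : ∀ p ∈ P, 0 < p) :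
    BddAbove {n | NT P n} :=
  ⟨2 * P.sum id, fun n hn => NT_le (P.sum id) P rfl hP hpos n hn⟩

end Stmt11Aux

open Stmt11Aux

theorem stmt11 (P : Finset ℕ) (hP : P.Nonempty) (hpos : ∀ p ∈ P, 0 < p)
    (hnt : ¬ ∀ p ∈ P, mP P ∣ p) :
    Lext P = mP P + max (Lext (Qred P)) (mP P - 1) := by
  have hm : mP P ∈ P := mP_mem P hP
  have hmpos : 0 < mP P := hpos _ hm
  have hbddP : BddAbove {n | NT P n} := bddAbove_NT P hP hpos
  have hbddQ : BddAbove {n | NT (Qred P) n} :=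
    bddAbove_NT (Qred P) (Qred_nonempty P) (Qred_pos P hP hpos)
  have h2m : NT P (2 * mP P - 1) := NT_two P hP hpos hnt
  have hLP_mem : Lext P ∈ {n | NT P n} := by
    rw [lext_def]
    exact Nat.sSup_mem ⟨2 * mP P - 1, h2m⟩ hbddP
  apply le_antisymm
  · -- upper bound
    by_cases hc : 2 * mP P ≤ Lext P
    · have hQ := NT_sub P hP hpos hc hLP_mem
      have h1 : Lext P - mP P ≤ Lext (Qred P) := by
        rw [lext_def]
        exact le_csSup hbddQ hQ
      rcases max_cases (Lext (Qred P)) (mP P - 1) with ⟨h, h'⟩ | ⟨h, h'⟩ <;>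
        rw [h] <;> omega
    · rcases max_cases (Lext (Qred P)) (mP P - 1) with ⟨h, h'⟩ | ⟨h, h'⟩ <;>
        rw [h] <;> omega
  · -- lower bound
    have h3 : 2 * mP P - 1 ≤ Lext P := by
      rw [lext_def]
      exact le_csSup hbddP h2m
    by_cases hQe : {n | NT (Qred P) n}.Nonempty
    · have hLQ_mem : Lext (Qred P) ∈ {n | NT (Qred P) n} := by
        rw [lext_def]
        exact Nat.sSup_mem hQe hbddQ
      have h1 : NT P (Lext (Qred P) + mP P) := NT_add P hP hLQ_mem
      have h2 : Lext (Qred P) + mP P ≤ Lext P := by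
        rw [lext_def]
        exact le_csSup hbddP h1
      rcases max_cases (Lext (Qred P)) (mP P - 1) with ⟨h, h'⟩ | ⟨h, h'⟩ <;>
        rw [h] <;> omega
    · have hz : Lext (Qred P) = 0 := by
        rw [lext_def, Set.not_nonempty_iff_eq_empty.mp hQe, csSup_empty]
        rfl
      rw [hz]
      rcases max_cases (0 : ℕ) (mP P - 1) with ⟨h, h'⟩ | ⟨h, h'⟩ <;>
        rw [h] <;> omega
end

section
/- Let P be a finite set of positive integers and n ≥ 0. Any word w of length n having all periods in P and attaining the maximal possible number of distinct letters is equal to FW(P,n) up to a renaming (injective substitution) of letters. -/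
/-!
A word with all periods in `P` also has period `m = min P` (or `m = 0` when `P = ∅`), so it is
constant on residue classes mod `m` and hence on every class of `≈_{P,n}`; that is, it factors
through `FW P n`. Since `FW P n` itself has all periods in `P`, maximality of the alphabet of `w`
says `w` uses at least as many letters as `FW P n` does, so the factor is injective on the letters
of `FW P n`.
-/

namespace HasPeriodF

variable {A : Type*} {w : ℕ → A} {n p : ℕ}

lemma zero (w : ℕ → A) (n : ℕ) : HasPeriodF w n 0 := fun _ _ => rfl

lemma nat_mul (h : HasPeriodF w n p) (k : ℕ) : HasPeriodF w n (k * p) := by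
  induction k with
  | zero => simpa using zero w n
  | succ k ih =>
    intro i hi
    rw [Nat.succ_mul, ← Nat.add_assoc] at hi ⊢
    exact (ih i (by omega)).trans (h _ hi)

lemma eq_of_modEq_of_le (h : HasPeriodF w n p) {a b : ℕ} (hb : b < n) (hab : a ≤ b)
    (hmod : a ≡ b [MOD p]) : w a = w b := by
  obtain ⟨k, hk⟩ := (Nat.modEq_iff_dvd' hab).mp hmod
  have hb' : b = a + k * p := by rw [Nat.mul_comm] at hk; omega
  subst hb'
  exact h.nat_mul k a hb

lemma eq_of_modEq (h : HasPeriodF w n p) {a b : ℕ} (ha : a < n) (hb : b < n)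
    (hmod : a ≡ b [MOD p]) : w a = w b := by
  rcases le_total a b with hab | hba
  · exact h.eq_of_modEq_of_le hb hab hmod
  · exact (h.eq_of_modEq_of_le ha hba hmod.symm).symm

lemma eq_of_max_sub_min (h : HasPeriodF w n p) {a b : ℕ} (ha : a < n) (hb : b < n)
    (hdist : max a b - min a b = p) : w a = w b := by
  rcases le_total a b with hab | hba
  · rw [max_eq_right hab, min_eq_left hab] at hdist
    simpa [show a + p = b by omega] using h a (by omega)
  · rw [max_eq_left hba, min_eq_right hba] at hdist
    simpa [show b + p = a by omega] using (h b (by omega)).symm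

end HasPeriodF

lemma mP_mem {P : Finset ℕ} (hP : P.Nonempty) : mP P ∈ P := by
  have : sInf (↑P : Set ℕ) ∈ (↑P : Set ℕ) := Nat.sInf_mem (by exact_mod_cast hP)
  exact_mod_cast this

lemma hasPeriodF_mP {A : Type*} {P : Finset ℕ} {w : ℕ → A} {n : ℕ}
    (hw : ∀ p ∈ P, HasPeriodF w n p) : HasPeriodF w n (mP P) := by
  rcases P.eq_empty_or_nonempty with rfl | hP
  · simpa [mP] using HasPeriodF.zero w n
  · exact hw _ (mP_mem hP)

lemma eq_of_eqvGen_simRel {A : Type*} {P : Finset ℕ} {w : ℕ → A} {n : ℕ}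
    (hw : ∀ p ∈ P, HasPeriodF w n p) {i j : ℕ} (hij : Relation.EqvGen (simRel P n) i j) :
    w i = w j := by
  have hm := hasPeriodF_mP hw
  induction hij with
  | rel a b hab =>
    obtain ⟨ha, hb, hmod | ⟨a', b', ha', hb', hma, hmb, hmem⟩⟩ := hab
    · exact hm.eq_of_modEq ha hb hmod
    · calc w a = w a' := hm.eq_of_modEq ha ha' hma.symm
        _ = w b' := (hw _ hmem).eq_of_max_sub_min ha' hb' rfl
        _ = w b := hm.eq_of_modEq hb' hb hmb
  | refl => rfl
  | symm _ _ _ ih => exact ih.symm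
  | trans _ _ _ _ _ ih₁ ih₂ => exact ih₁.trans ih₂

lemma eqvGen_FW (P : Finset ℕ) (k i : ℕ) : Relation.EqvGen (simRel P k) i (FW P k i) :=
  Nat.sInf_mem (⟨i, Relation.EqvGen.refl i⟩ : (cls P k i).Nonempty)

lemma FW_hasPeriodF (P : Finset ℕ) (n : ℕ) : ∀ p ∈ P, HasPeriodF (FW P n) n p := by
  intro p hp i hi
  have hrel : Relation.EqvGen (simRel P n) i (i + p) :=
    .rel _ _ ⟨by omega, hi, .inr ⟨i, i + p, by omega, hi, rfl, rfl, by simpa using hp⟩⟩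
  have hcls : cls P n i = cls P n (i + p) := by
    ext j
    exact ⟨fun h => (hrel.symm _ _).trans _ _ _ h, fun h => hrel.trans _ _ _ h⟩
  simp only [FW, hcls]

lemma Finset.injOn_of_card_image_le_card_image_comp {α β γ : Type*} [DecidableEq β]
    [DecidableEq γ] (s : Finset α) (u : α → β) (g : β → γ)
    (hcard : (s.image u).card ≤ (s.image (g ∘ u)).card) : Set.InjOn g (s.image u) := by
  rw [← Finset.image_image] at hcard
  exact Finset.injOn_of_card_image_eq (le_antisymm Finset.card_image_le hcard)

theorem stmt13_general {A : Type*} [DecidableEq A] (P : Finset ℕ)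
    (n : ℕ) (w : ℕ → A)
    (hw : ∀ p ∈ P, HasPeriodF w n p)
    (hmax : ∀ v : ℕ → ℕ, (∀ p ∈ P, HasPeriodF v n p) →
      ((Finset.range n).image v).card ≤ ((Finset.range n).image w).card) :
    ∃ f : ℕ → A, (∀ i < n, w i = f (FW P n i)) ∧
      Set.InjOn f (FW P n '' Set.Iio n) := by
  have hfactor : ∀ i, w i = w (FW P n i) := fun i => eq_of_eqvGen_simRel hw (eqvGen_FW P n i)
  refine ⟨w, fun i _ => hfactor i, ?_⟩
  have hletters : (Finset.range n).image (w ∘ FW P n) = (Finset.range n).image w :=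
    Finset.image_congr fun i _ => (hfactor i).symm
  have hinj := Finset.injOn_of_card_image_le_card_image_comp (Finset.range n) (FW P n) w
    (hletters ▸ hmax _ (FW_hasPeriodF P n))
  simpa only [Finset.coe_image, Finset.coe_range] using hinj

theorem stmt13 {A : Type*} [DecidableEq A] (P : Finset ℕ) (hP : P.Nonempty)
    (hpos : ∀ p ∈ P, 0 < p) (n : ℕ) (w : ℕ → A)
    (hw : ∀ p ∈ P, HasPeriodF w n p)
    (hmax : ∀ v : ℕ → ℕ, (∀ p ∈ P, HasPeriodF v n p) →
      ((Finset.range n).image v).card ≤ ((Finset.range n).image w).card) :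
    ∃ f : ℕ → A, (∀ i < n, w i = f (FW P n i)) ∧
      Set.InjOn f (FW P n '' Set.Iio n) :=
  stmt13_general P n w hw hmax
end

section
/- Let w be a word of length n with periods p and q where p + q ≤ n + gcd(p,q). Then gcd(p,q) is a period of w (Fine–Wilf theorem, the two-period base case subsumed by the FW(P,n) construction: for P = {p,q} and n ≥ p + q - gcd(p,q), the relation ≈_{P,n} identifies all indices congruent mod gcd(p,q)). -/
namespace HasPeriodF

variable {A : Type*} {w : ℕ → A} {n m p q g : ℕ}

theorem mono (hmn : m ≤ n) (hw : HasPeriodF w n p) : HasPeriodF w m p :=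
  fun i hi => hw i (by omega)

theorem mul (hw : HasPeriodF w n p) (k : ℕ) : HasPeriodF w n (k * p) := by
  induction k with
  | zero => simp [HasPeriodF]
  | succ k ih =>
    intro i hi
    rw [ih i (by nlinarith), hw (i + k * p) (by nlinarith)]
    ring_nf

theorem apply_mod (hw : HasPeriodF w n p) {i : ℕ} (hi : i < n) : w i = w (i % p) := by
  have := (hw.mul (i / p)) (i % p) (by rwa [Nat.mod_add_div'])
  rw [this, Nat.mod_add_div']

theorem sub (hpq : p ≤ q) (hwp : HasPeriodF w n p) (hwq : HasPeriodF w n q) :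
    HasPeriodF w (n - p) (q - p) := by
  intro i hi
  rw [hwq i (by omega), hwp (i + (q - p)) (by omega), Nat.add_assoc, Nat.sub_add_cancel hpq]

theorem of_prefix_of_dvd (hwp : HasPeriodF w n p) (hwg : HasPeriodF w m g) (hp : 0 < p)
    (hpm : p ≤ m) (hgp : g ∣ p) : HasPeriodF w n g := by
  have reduce : ∀ i < n, w i = w (i % g) := fun i hi => by
    rw [hwp.apply_mod hi, hwg.apply_mod (by have := Nat.mod_lt i hp; omega),
      Nat.mod_mod_of_dvd i hgp]
  intro i hi
  rw [reduce i (by omega), reduce (i + g) hi, Nat.add_mod_right]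

theorem gcd (hwp : HasPeriodF w n p) (hwq : HasPeriodF w n q) (h : p + q ≤ n + Nat.gcd p q) :
    HasPeriodF w n (Nat.gcd p q) := by
  induction hs : p + q using Nat.strong_induction_on generalizing p q n with
  | _ s ih =>
  wlog hpq : p ≤ q generalizing p q
  · rw [Nat.gcd_comm] at h ⊢
    exact this hwq hwp (by omega) (by omega) (by omega)
  rcases Nat.eq_zero_or_pos p with rfl | hp
  · simpa using hwq
  by_cases hdvd : p ∣ q
  · rwa [Nat.gcd_eq_left hdvd]
  have hgcd : Nat.gcd p (q - p) = Nat.gcd p q := by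
    rw [Nat.gcd_comm p q, ← Nat.gcd_sub_self_left hpq, Nat.gcd_comm]
  -- `gcd p q ∣ q - p ≠ 0`, so `q ≥ p + gcd p q` and hence `2 p ≤ n`
  have hgap : Nat.gcd p q ≤ q - p := Nat.le_of_dvd
    (by have := Nat.lt_of_le_of_ne hpq (by rintro rfl; exact hdvd dvd_rfl); omega)
    (hgcd ▸ Nat.gcd_dvd_right p (q - p))
  have hprefix : HasPeriodF w (n - p) (Nat.gcd p q) := hgcd ▸
    ih q (by omega) (hwp.mono (by omega)) (hwp.sub hpq hwq) (by omega) (by omega)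
  exact hwp.of_prefix_of_dvd hprefix hp (by omega) (Nat.gcd_dvd_left p q)

end HasPeriodF

theorem stmt17_general {A : Type*} (w : ℕ → A) (n p q : ℕ)
    (hwp : HasPeriodF w n p) (hwq : HasPeriodF w n q)
    (h : p + q ≤ n + Nat.gcd p q) :
    HasPeriodF w n (Nat.gcd p q) :=
  hwp.gcd hwq h

theorem stmt17 {A : Type*} (w : ℕ → A) (n p q : ℕ) (hp : 0 < p) (hq : 0 < q)
    (hwp : HasPeriodF w n p) (hwq : HasPeriodF w n q)
    (h : p + q ≤ n + Nat.gcd p q) :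
    HasPeriodF w n (Nat.gcd p q) :=
  stmt17_general w n p q hwp hwq h
end
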